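/- arXiv:2005.01022 — 2 statements merged into one kernel-verified Lean document; each statement's English description precedes it below -/
import Mathlib

section
/- If L is a symmetric linear operator and K is a skew-symmetric linear operator on a finite-dimensional real inner product space, then every Jordan chain v₁,…,v_m with L v₁ = 0 and L v_j = K v_{j−1} for j ≥ 2, that terminates (i.e., L v = K v_m has no solution), has even length m. Specifically: if v₁,…,v₃ satisfy L v₁ = 0, L v₂ = K v₁, L v₃ = K v₂, Ker L = span{v₁}, and Range L = (Ker L)^⊥, then L v₄ = K v₃ is solvable. -/
/-! Skew-symmetry gives `⟪v₁, K v₃⟫ = -⟪L v₂, v₃⟫ = -⟪v₂, K v₂⟫ = 0`, so `K v₃` lies in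
`(Ker L)ᗮ = Range L`. -/

section SkewJordanChain

open scoped InnerProductSpace

variable {V : Type*} [NormedAddCommGroup V] [InnerProductSpace ℝ V]

theorem inner_map_self_eq_zero_of_skew {K : V →ₗ[ℝ] V}
    (hK : ∀ x y : V, ⟪K x, y⟫_ℝ = -⟪x, K y⟫_ℝ) (x : V) : ⟪K x, x⟫_ℝ = 0 := by
  have h := hK x x
  rw [real_inner_comm (K x) x] at h
  linarith

theorem inner_skew_jordanChain_eq_zero {L K : V →ₗ[ℝ] V} (hL : L.IsSymmetric)
    (hK : ∀ x y : V, ⟪K x, y⟫_ℝ = -⟪x, K y⟫_ℝ) {v₁ v₂ v₃ : V}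
    (h2 : L v₂ = K v₁) (h3 : L v₃ = K v₂) : ⟪v₁, K v₃⟫_ℝ = 0 :=
  calc ⟪v₁, K v₃⟫_ℝ = -⟪K v₁, v₃⟫_ℝ := by rw [hK, neg_neg]
    _ = -⟪v₂, K v₂⟫_ℝ := by rw [← h2, hL, h3]
    _ = 0 := by rw [real_inner_comm, inner_map_self_eq_zero_of_skew hK, neg_zero]

end SkewJordanChain

theorem stmt9_general {V : Type*} [NormedAddCommGroup V] [InnerProductSpace ℝ V]
    (L K : V →ₗ[ℝ] V)
    (hL : ∀ x y : V, (inner ℝ (L x) y : ℝ) = inner ℝ x (L y))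
    (hK : ∀ x y : V, (inner ℝ (K x) y : ℝ) = -inner ℝ x (K y))
    (v₁ v₂ v₃ : V)
    (hker : LinearMap.ker L = Submodule.span ℝ {v₁})
    (hrange : LinearMap.range L = (LinearMap.ker L)ᗮ)
    (h2 : L v₂ = K v₁) (h3 : L v₃ = K v₂) :
    ∃ v₄ : V, L v₄ = K v₃ := by
  have hmem : K v₃ ∈ (ℝ ∙ v₁)ᗮ :=
    Submodule.mem_orthogonal_singleton_iff_inner_right.mpr
      (inner_skew_jordanChain_eq_zero hL hK h2 h3)
  rw [← hker, ← hrange] at hmem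
  exact LinearMap.mem_range.mp hmem

theorem stmt9 {V : Type*} [NormedAddCommGroup V] [InnerProductSpace ℝ V]
    [FiniteDimensional ℝ V]
    (L K : V →ₗ[ℝ] V)
    (hL : ∀ x y : V, (inner ℝ (L x) y : ℝ) = inner ℝ x (L y))
    (hK : ∀ x y : V, (inner ℝ (K x) y : ℝ) = -inner ℝ x (K y))
    (v₁ v₂ v₃ : V) (hv₁ : v₁ ≠ 0)
    (hker : LinearMap.ker L = Submodule.span ℝ {v₁})
    (hrange : LinearMap.range L = (LinearMap.ker L)ᗮ)
    (h1 : L v₁ = 0) (h2 : L v₂ = K v₁) (h3 : L v₃ = K v₂) :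
    ∃ v₄ : V, L v₄ = K v₃ :=
  stmt9_general L K hL hK v₁ v₂ v₃ hker hrange h2 h3
end

section
/- If a real quadratic pencil E(c) = c²A + cB + C with A,B,C symmetric satisfies ⟨u,Bu⟩²/4 > ⟨u,Au⟩·⟨u,Cu⟩ for all nonzero u ∈ ℝᴺ and A is positive definite, then for every nonzero u the scalar quadratic ⟨u,Au⟩c² + ⟨u,Bu⟩c + ⟨u,Cu⟩ has two distinct real roots; in particular every eigenvalue c with E(c)u = 0 for some u ≠ 0 is real. -/
/-!
Fix an eigenpair `E(c) u = 0`, `u ≠ 0`, of the pencil `E(c) = c²A + cB + C`. Since `E(c)` is complex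
symmetric, for `w = Re (θ u)` one finds `4 wᵀE(c)w = θ̄² · ūᵀE(c)ū`, so rotating `u` by a suitable phase
`θ` yields a real `w ≠ 0` with `wᵀE(c)w = α(w) c² + 2β(w) c + γ(w)` real and nonnegative. For
`c = μ + iν` with `ν ≠ 0`, the imaginary part forces `β(w) = -μ α(w)`, and the real part then gives
`γ(w) ≥ (μ² + ν²) α(w)`, so `β(w)² < α(w) γ(w)`, contradicting hyperbolicity.
-/

open Matrix
open scoped ComplexOrder

lemma exists_roots_ne_of_discrim_pos {a b c : ℝ} (ha : a ≠ 0) (hd : 0 < discrim a b c) :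
    ∃ r₁ r₂ : ℝ, r₁ ≠ r₂ ∧ ∀ x : ℝ, a * x ^ 2 + b * x + c = 0 ↔ x = r₁ ∨ x = r₂ := by
  set s := √(discrim a b c)
  have hs : 0 < s := Real.sqrt_pos.mpr hd
  refine ⟨(-b + s) / (2 * a), (-b - s) / (2 * a), ?_, fun x => ?_⟩
  · rw [Ne, div_left_inj' (mul_ne_zero two_ne_zero ha)]
    linarith
  · rw [sq, quadratic_eq_zero_iff ha (Real.mul_self_sqrt hd.le).symm]

lemma Complex.im_eq_zero_of_quadratic_nonneg {a b c : ℝ} (ha : 0 < a) (hd : 0 < discrim a b c)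
    {z : ℂ} (hz : 0 ≤ (a : ℂ) * z ^ 2 + b * z + c) : z.im = 0 := by
  obtain ⟨hre, him⟩ := Complex.nonneg_iff.mp hz
  simp only [Complex.add_re, Complex.add_im, Complex.mul_re, Complex.mul_im, Complex.ofReal_re,
    Complex.ofReal_im, sq, zero_mul, sub_zero, add_zero] at hre him
  by_contra hν
  have hb : b = -2 * a * z.re := by
    have : z.im * (2 * a * z.re + b) = 0 := by linarith
    linarith [(mul_eq_zero.mp this).resolve_left hν]
  unfold discrim at hd
  subst hb
  nlinarith [mul_pos ha (mul_self_pos.mpr hν)]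

lemma Matrix.IsSymm.add_dotProduct_mulVec_add_of_mulVec_eq_zero {n R : Type*} [Fintype n]
    [CommSemiring R] {E : Matrix n n R} (hE : E.IsSymm) {v : n → R} (hv : E *ᵥ v = 0)
    (y : n → R) : (v + y) ⬝ᵥ E *ᵥ (v + y) = y ⬝ᵥ E *ᵥ y := by
  have hvy : v ⬝ᵥ E *ᵥ y = 0 := by
    rw [dotProduct_mulVec, ← mulVec_transpose, hE.eq, hv, zero_dotProduct]
  rw [mulVec_add, hv, zero_add, add_dotProduct, hvy, zero_add]

section Pencil

variable {n : Type*}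

def quadPencil (A B C : Matrix n n ℝ) (c : ℂ) : Matrix n n ℂ :=
  c ^ 2 • A.map Complex.ofReal + c • B.map Complex.ofReal + C.map Complex.ofReal

lemma quadPencil_isSymm {A B C : Matrix n n ℝ} (hA : A.IsSymm) (hB : B.IsSymm) (hC : C.IsSymm)
    (c : ℂ) : (quadPencil A B C c).IsSymm :=
  (((hA.map _).smul _).add ((hB.map _).smul _)).add (hC.map _)

variable [Fintype n]

lemma ofReal_dotProduct_quadPencil_mulVec (A B C : Matrix n n ℝ) (c : ℂ) (w : n → ℝ) :
    (Complex.ofReal ∘ w) ⬝ᵥ quadPencil A B C c *ᵥ (Complex.ofReal ∘ w)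
      = (w ⬝ᵥ A *ᵥ w : ℝ) * c ^ 2 + (w ⬝ᵥ B *ᵥ w : ℝ) * c + (w ⬝ᵥ C *ᵥ w : ℝ) := by
  have hmap (S : Matrix n n ℝ) : (Complex.ofReal ∘ w) ⬝ᵥ S.map Complex.ofReal *ᵥ
      (Complex.ofReal ∘ w) = (w ⬝ᵥ S *ᵥ w : ℝ) := by
    rw [show ((w ⬝ᵥ S *ᵥ w : ℝ) : ℂ) = Complex.ofRealHom (w ⬝ᵥ S *ᵥ w) from rfl,
      RingHom.map_dotProduct]
    congr 1
    funext i
    exact (RingHom.map_mulVec Complex.ofRealHom S w i).symm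
  simp only [quadPencil, add_mulVec, smul_mulVec, dotProduct_add, dotProduct_smul, hmap,
    smul_eq_mul]
  ring

end Pencil

section ComplexSymmetric

variable {n : Type*} [Fintype n] {E : Matrix n n ℂ}

lemma Matrix.IsSymm.dotProduct_mulVec_re_of_mulVec_eq_zero (hE : E.IsSymm) {v : n → ℂ}
    (hv : E *ᵥ v = 0) :
    4 * ((Complex.ofReal ∘ Complex.re ∘ v) ⬝ᵥ E *ᵥ (Complex.ofReal ∘ Complex.re ∘ v))
      = star v ⬝ᵥ E *ᵥ star v := by
  have hre : (2 : ℂ) • (Complex.ofReal ∘ Complex.re ∘ v) = v + star v := by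
    ext i
    simp [Complex.add_conj]
  rw [← hE.add_dotProduct_mulVec_add_of_mulVec_eq_zero hv (star v), ← hre, mulVec_smul,
    smul_dotProduct, dotProduct_smul, smul_eq_mul, smul_eq_mul]
  ring

lemma Matrix.IsSymm.exists_ne_zero_dotProduct_mulVec_nonneg (hE : E.IsSymm) {u : n → ℂ}
    (hu0 : u ≠ 0) (hu : E *ᵥ u = 0) :
    ∃ w : n → ℝ, w ≠ 0 ∧ 0 ≤ (Complex.ofReal ∘ w) ⬝ᵥ E *ᵥ (Complex.ofReal ∘ w) := by
  set K := star u ⬝ᵥ E *ᵥ star u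
  have hrot (θ : ℂ) : 4 * ((Complex.ofReal ∘ Complex.re ∘ (θ • u)) ⬝ᵥ
      E *ᵥ (Complex.ofReal ∘ Complex.re ∘ (θ • u))) = star θ ^ 2 * K := by
    rw [hE.dotProduct_mulVec_re_of_mulVec_eq_zero (by rw [mulVec_smul, hu, smul_zero]),
      star_smul, mulVec_smul, smul_dotProduct, dotProduct_smul, smul_eq_mul, smul_eq_mul, sq,
      mul_assoc]
  by_cases hK : K = 0
  · have hq (θ : ℂ) : (Complex.ofReal ∘ Complex.re ∘ (θ • u)) ⬝ᵥ
        E *ᵥ (Complex.ofReal ∘ Complex.re ∘ (θ • u)) = 0 := by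
      simpa [hK] using hrot θ
    by_cases hre : Complex.re ∘ u = 0
    · refine ⟨Complex.re ∘ ((-Complex.I) • u), fun him => hu0 ?_, (hq _).ge⟩
      funext i
      apply Complex.ext
      · simpa using congrFun hre i
      · simpa using congrFun him i
    · exact ⟨Complex.re ∘ u, hre, by simpa using (hq 1).ge⟩
  · obtain ⟨z, hz⟩ := IsAlgClosed.exists_pow_nat_eq (star K) two_pos
    have h := hrot (star z)
    rw [star_star, hz] at h
    have hpos : 0 < star K * K :=
      (star_mul_self_nonneg K).lt_of_ne' (mul_ne_zero (star_ne_zero.mpr hK) hK)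
    refine ⟨Complex.re ∘ (star z • u), fun hw => ?_, ?_⟩
    · rw [hw] at h
      simp [hK] at h
    · rw [← h] at hpos
      exact (pos_of_mul_pos_right hpos (by norm_num)).le

end ComplexSymmetric

theorem stmt17 {N : ℕ} (A B C : Matrix (Fin N) (Fin N) ℝ)
    (hA : A.PosDef) (hBs : B.IsSymm) (hCs : C.IsSymm)
    (hhyp : ∀ u : Fin N → ℝ, u ≠ 0 →
      ((1 / 2 : ℝ) * (u ⬝ᵥ B.mulVec u)) ^ 2 > (u ⬝ᵥ A.mulVec u) * (u ⬝ᵥ C.mulVec u)) :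
    (∀ u : Fin N → ℝ, u ≠ 0 → ∃ r₁ r₂ : ℝ, r₁ ≠ r₂ ∧
      ∀ x : ℝ, (u ⬝ᵥ A.mulVec u) * x ^ 2 + (u ⬝ᵥ B.mulVec u) * x + (u ⬝ᵥ C.mulVec u) = 0
        ↔ (x = r₁ ∨ x = r₂)) ∧
    (∀ c : ℂ, (c ^ 2 • A.map (Complex.ofReal) + c • B.map (Complex.ofReal)
        + C.map (Complex.ofReal)).det = 0 → c.im = 0) := by
  have hα (u : Fin N → ℝ) (hu : u ≠ 0) : 0 < u ⬝ᵥ A *ᵥ u := by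
    simpa using hA.dotProduct_mulVec_pos hu
  have hdisc (u : Fin N → ℝ) (hu : u ≠ 0) :
      0 < discrim (u ⬝ᵥ A *ᵥ u) (u ⬝ᵥ B *ᵥ u) (u ⬝ᵥ C *ᵥ u) := by
    unfold discrim
    linarith [hhyp u hu]
  refine ⟨fun u hu => exists_roots_ne_of_discrim_pos (hα u hu).ne' (hdisc u hu), fun c hdet => ?_⟩
  obtain ⟨u, hu0, hu⟩ := exists_mulVec_eq_zero_iff.mpr hdet
  have hAs : A.IsSymm := isHermitian_iff_isSymm.mp hA.1
  obtain ⟨w, hw0, hw⟩ :=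
    (quadPencil_isSymm hAs hBs hCs c).exists_ne_zero_dotProduct_mulVec_nonneg hu0 hu
  rw [ofReal_dotProduct_quadPencil_mulVec] at hw
  exact Complex.im_eq_zero_of_quadratic_nonneg (hα w hw0) (hdisc w hw0) hw
end
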